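/- Let R be a commutative Noetherian ring, N ⊆ M and N′ ⊆ M′ proper submodules of finitely generated R-modules, and p₁, …, p_k distinct primes. If P_M(N) = p₁^{r₁}⋯p_k^{r_k} and P_{M′}(N′) = p₁^{s₁}⋯p_k^{s_k} with r_i, s_i ≥ 0 and r_i + s_i > 0 for each i, then P_{M ⊕ M′}(N ⊕ N′) = p₁^{t₁}⋯p_k^{t_k} where t_i = max{r_i, s_i}. -/

import Mathlib

variable {R : Type*} [CommRing R] {M : Type*} [AddCommGroup M] [Module R M]

/-- The colon submodule `(N :_M I) = {x ∈ M | I • x ⊆ N}`. -/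
def colonSubmodule (N : Submodule R M) (I : Ideal R) : Submodule R M where
  carrier := {x | ∀ a ∈ I, a • x ∈ N}
  add_mem' := fun hx hy a ha => by simpa [smul_add] using N.add_mem (hx a ha) (hy a ha)
  zero_mem' := fun a _ => by simp
  smul_mem' := fun c x hx a ha => by
    rw [smul_comm]
    exact N.smul_mem c (hx a ha)

/-- `K` is a `p`-prime extension of `N`, i.e. `N` is a `p`-prime submodule of `K`. -/
def IsPrimeExt (p : Ideal R) (N K : Submodule R M) : Prop :=
  N < K ∧ N.colon K = p ∧ ∀ a : R, ∀ x ∈ K, a • x ∈ N → x ∈ N ∨ a ∈ p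

/-- The associated primes of `T / N` for submodules `N ≤ T ≤ M`. -/
def assOf (R : Type*) {M : Type*} [CommRing R] [AddCommGroup M] [Module R M]
    (N T : Submodule R M) : Set (Ideal R) :=
  associatedPrimes R ↥(T.map N.mkQ)

/-- `K` is a maximal `p`-prime extension of `N` inside `T`. -/
def IsMaximalPrimeExtIn (T : Submodule R M) (p : Ideal R) (N K : Submodule R M) : Prop :=
  K ≤ T ∧ IsPrimeExt p N K ∧ ∀ L ≤ T, IsPrimeExt p N L → ¬ K < L

/-- `K` is a regular `p`-prime extension of `N` inside `T`: a maximal `p`-prime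
extension where `p` is a maximal element of `Ass (T/N)`. -/
def IsRegularPrimeExtIn (T : Submodule R M) (p : Ideal R) (N K : Submodule R M) : Prop :=
  IsMaximalPrimeExtIn T p N K ∧ Maximal (· ∈ assOf R N T) p

/-- A regular prime extension (RPE) filtration inside `T` with primes `p i`. -/
def IsRPEFiltrationIn (T : Submodule R M) {n : ℕ}
    (F : Fin (n + 1) → Submodule R M) (p : Fin n → Ideal R) : Prop :=
  ∀ i : Fin n, IsRegularPrimeExtIn T (p i) (F i.castSucc) (F i.succ)

/-- The generalized prime ideal factorization of `N` in `T` is given by the multiset `s`: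
there is an RPE filtration of `T` over `N` whose multiset of primes is `s`. -/
def HasGPIF (N T : Submodule R M) (s : Multiset (Ideal R)) : Prop :=
  ∃ (n : ℕ) (F : Fin (n + 1) → Submodule R M) (p : Fin n → Ideal R),
    F 0 = N ∧ F (Fin.last n) = T ∧ IsRPEFiltrationIn T F p ∧ (List.ofFn p : Multiset (Ideal R)) = s

/-! A regular prime extension of `N` in `M` exists exactly for the primes `p` that are maximal in
`Ass(M/N)`, and it is then the socle `(N :_M p)`; so an RPE filtration is a chain of socles, and by
an exchange argument any maximal associated prime may be split off first, taking one copy of `p`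
out of the factorization. Since `Ass` of a direct sum is the union and socles commute with direct
sums, splitting off a maximal associated prime `p` of `(M ⊕ M')/(N ⊕ N')` takes one `p` out of each
factor that has one: this is the recursion of the multiset union, i.e. of the maximum of
exponents. -/

theorem Multiset.erase_union_distrib {α : Type*} [DecidableEq α] (s t : Multiset α) (a : α) :
    (s ∪ t).erase a = s.erase a ∪ t.erase a := by
  ext b
  by_cases hb : b = a
  · subst hb
    simp only [count_erase_self, count_union]
    omega
  · simp only [count_erase_of_ne hb, count_union]

theorem Multiset.sum_replicate_union_sum_replicate {ι α : Type*} [Fintype ι] [DecidableEq α]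
    {p : ι → α} (hp : Function.Injective p) (r s : ι → ℕ) :
    (∑ i, replicate (r i) (p i)) ∪ ∑ i, replicate (s i) (p i) =
      ∑ i, replicate (max (r i) (s i)) (p i) := by
  classical
  ext a
  simp only [count_union, count_sum', count_replicate]
  by_cases ha : ∃ i, p i = a
  · obtain ⟨i, rfl⟩ := ha
    simp [hp.eq_iff]
  · simp only [not_exists] at ha
    simp only [ha, if_false, Finset.sum_const_zero, max_self]

open Submodule

section Socle

theorem mem_colonSubmodule {N : Submodule R M} {I : Ideal R} {x : M} :
    x ∈ colonSubmodule N I ↔ ∀ a ∈ I, a • x ∈ N := Iff.rfl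

theorem mem_colonSubmodule_iff_le_colon {N : Submodule R M} {I : Ideal R} {x : M} :
    x ∈ colonSubmodule N I ↔ I ≤ N.colon {x} := by
  simp only [mem_colonSubmodule, SetLike.le_def, mem_colon_singleton]

theorem le_colonSubmodule (N : Submodule R M) (I : Ideal R) : N ≤ colonSubmodule N I :=
  fun _ hx _ _ => N.smul_mem _ hx

theorem le_colonSubmodule_colon (N L : Submodule R M) : L ≤ colonSubmodule N (N.colon L) :=
  fun _ hx _ ha => mem_colon.1 ha _ hx

theorem colonSubmodule_comm (N : Submodule R M) (I J : Ideal R) :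
    colonSubmodule (colonSubmodule N I) J = colonSubmodule (colonSubmodule N J) I := by
  ext x
  simp only [mem_colonSubmodule]
  exact ⟨fun h a ha b hb => smul_comm a b x ▸ h b hb a ha,
    fun h a ha b hb => smul_comm a b x ▸ h b hb a ha⟩

variable {M' : Type*} [AddCommGroup M'] [Module R M']

theorem colonSubmodule_prod (N : Submodule R M) (N' : Submodule R M') (I : Ideal R) :
    colonSubmodule (N.prod N') I = (colonSubmodule N I).prod (colonSubmodule N' I) := by
  ext x
  simp only [mem_colonSubmodule, mem_prod]
  exact ⟨fun h => ⟨fun a ha => (h a ha).1, fun a ha => (h a ha).2⟩,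
    fun h a ha => ⟨h.1 a ha, h.2 a ha⟩⟩

theorem colon_singleton_prod (N : Submodule R M) (N' : Submodule R M') (x : M) (x' : M') :
    (N.prod N').colon {(x, x')} = N.colon {x} ⊓ N'.colon {x'} := by
  ext a
  simp [mem_colon_singleton]

end Socle

section AssociatedPrimes

theorem assOf_top_eq (N : Submodule R M) : assOf R N ⊤ = associatedPrimes R (M ⧸ N) := by
  rw [assOf, Submodule.map_top, range_mkQ]
  exact LinearEquiv.AssociatedPrimes.eq topEquiv

theorem colon_bot_singleton_mkQ (N : Submodule R M) (x : M) :
    (⊥ : Submodule R (M ⧸ N)).colon {N.mkQ x} = N.colon {x} := by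
  ext a
  simp [mem_colon_singleton, ← Quotient.mk_smul, Quotient.mk_eq_zero]

theorem assOf_top_top : assOf R (⊤ : Submodule R M) ⊤ = ∅ := by
  rw [assOf_top_eq]
  exact associatedPrimes.eq_empty_of_subsingleton

variable [IsNoetherianRing R] {N : Submodule R M}

theorem mem_assOf_top_iff {p : Ideal R} :
    p ∈ assOf R N ⊤ ↔ p.IsPrime ∧ ∃ x, p = N.colon {x} := by
  rw [assOf_top_eq, AssociatedPrimes.mem_iff, isAssociatedPrime_iff, N.mkQ_surjective.exists]
  simp only [colon_bot_singleton_mkQ]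

theorem exists_mem_assOf_top_colon_le {x : M} (hx : x ∉ N) :
    ∃ p ∈ assOf R N ⊤, N.colon {x} ≤ p := by
  have hx' : N.mkQ x ≠ 0 := by simpa [Quotient.mk_eq_zero] using hx
  obtain ⟨p, hp, hle⟩ := exists_le_isAssociatedPrime_of_isNoetherianRing R _ hx'
  exact ⟨p, assOf_top_eq N ▸ hp, colon_bot_singleton_mkQ N x ▸ hle⟩

theorem exists_maximal_mem_assOf_top (hN : N ≠ ⊤) : ∃ p, Maximal (· ∈ assOf R N ⊤) p := by
  have : Nontrivial (M ⧸ N) := Quotient.nontrivial_iff.2 hN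
  exact exists_maximal_of_wellFoundedGT _ (assOf_top_eq N ▸ associatedPrimes.nonempty R (M ⧸ N))

theorem assOf_top_prod {M' : Type*} [AddCommGroup M'] [Module R M'] (N : Submodule R M)
    (N' : Submodule R M') :
    assOf R (N.prod N') ⊤ = assOf R N ⊤ ∪ assOf R N' ⊤ := by
  ext p
  simp only [Set.mem_union, mem_assOf_top_iff, Prod.exists, colon_singleton_prod]
  constructor
  · rintro ⟨hp, x, x', rfl⟩
    rcases hp.inf_le.1 le_rfl with h | h
    · exact Or.inl ⟨hp, x, le_antisymm inf_le_left h⟩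
    · exact Or.inr ⟨hp, x', le_antisymm inf_le_right h⟩
  · rintro (⟨hp, x, rfl⟩ | ⟨hp, x', rfl⟩)
    · exact ⟨hp, x, 0, by simp [SetLike.le_def]⟩
    · exact ⟨hp, 0, x', by simp [SetLike.le_def]⟩

end AssociatedPrimes

section RegularPrimeExt

variable [IsNoetherianRing R] {N K : Submodule R M} {p p₀ : Ideal R}

theorem colon_singleton_eq_of_mem_colonSubmodule (hp : ∀ q ∈ assOf R N ⊤, p ≤ q → q ≤ p)
    {x : M} (hx : x ∈ colonSubmodule N p) (hxN : x ∉ N) :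
    N.colon {x} = p ∧ p ∈ assOf R N ⊤ := by
  obtain ⟨q, hq, hxq⟩ := exists_mem_assOf_top_colon_le hxN
  have hpx : p ≤ N.colon {x} := fun a ha => mem_colon_singleton.2 (hx a ha)
  obtain rfl : q = p := le_antisymm (hp q hq (hpx.trans hxq)) (hpx.trans hxq)
  exact ⟨le_antisymm hxq hpx, hq⟩

theorem colonSubmodule_eq_self (hp : ∀ q ∈ assOf R N ⊤, p ≤ q → q ≤ p)
    (hpN : p ∉ assOf R N ⊤) : colonSubmodule N p = N :=
  le_antisymm (fun _ hx => by_contra fun hxN =>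
    hpN (colon_singleton_eq_of_mem_colonSubmodule hp hx hxN).2) (le_colonSubmodule N p)

theorem isRegularPrimeExtIn_colonSubmodule (hmax : Maximal (· ∈ assOf R N ⊤) p) :
    IsRegularPrimeExtIn ⊤ p N (colonSubmodule N p) := by
  have hp : ∀ q ∈ assOf R N ⊤, p ≤ q → q ≤ p := fun _ hq => hmax.2 hq
  obtain ⟨hprime, x, hx⟩ := mem_assOf_top_iff.1 hmax.1
  have hxC : x ∈ colonSubmodule N p := fun a ha => mem_colon_singleton.1 (hx ▸ ha)
  have hxN : x ∉ N := fun h =>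
    hprime.ne_top ((Ideal.eq_top_iff_one _).2 (hx ▸ mem_colon_singleton.2 (by simpa using h)))
  refine ⟨⟨le_top, ⟨?_, ?_, ?_⟩, ?_⟩, hmax⟩
  · exact (le_colonSubmodule N p).lt_of_ne fun h => hxN (h.ge hxC)
  · exact le_antisymm (fun a ha => hx ▸ mem_colon_singleton.2 (mem_colon.1 ha x hxC))
      fun a ha => mem_colon.2 fun z hz => hz a ha
  · intro a z hz haz
    by_cases hzN : z ∈ N
    · exact Or.inl hzN
    · exact Or.inr ((colon_singleton_eq_of_mem_colonSubmodule hp hz hzN).1 ▸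
        mem_colon_singleton.2 haz)
  · exact fun L _ hL hlt => hlt.not_ge (hL.2.1 ▸ le_colonSubmodule_colon N L)

theorem IsRegularPrimeExtIn.eq_colonSubmodule (h : IsRegularPrimeExtIn ⊤ p N K) :
    K = colonSubmodule N p := by
  obtain ⟨⟨-, ⟨-, hcolon, -⟩, hmaxExt⟩, hmax⟩ := h
  exact (hcolon ▸ le_colonSubmodule_colon N K).eq_of_not_lt
    (hmaxExt _ le_top (isRegularPrimeExtIn_colonSubmodule hmax).1.2.1)

theorem assOf_top_colonSubmodule_subset (N : Submodule R M) (I : Ideal R) :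
    assOf R (colonSubmodule N I) ⊤ ⊆ assOf R N ⊤ := by
  intro q hq
  obtain ⟨hprime, x, rfl⟩ := mem_assOf_top_iff.1 hq
  obtain ⟨S, rfl⟩ : I.FG := IsNoetherian.noetherian I
  -- `I` is finitely generated, so this colon is a finite intersection; being prime, it is one of
  -- the intersected ideals
  have hcolon : (colonSubmodule N (Ideal.span S)).colon {x} = S.inf fun b => N.colon {b • x} := by
    ext a
    simp only [mem_colon_singleton, mem_finsetInf, mem_colonSubmodule_iff_le_colon, Ideal.span_le,
      Set.subset_def, SetLike.mem_coe, smul_comm a]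
  rw [hcolon] at hprime ⊢
  obtain ⟨b, hb, hle⟩ := hprime.inf_le'.1 le_rfl
  exact mem_assOf_top_iff.2 ⟨hprime, b • x, le_antisymm (Finset.inf_le hb) hle⟩

theorem maximal_assOf_top_colonSubmodule (hp : Maximal (· ∈ assOf R N ⊤) p)
    (hp₀ : Maximal (· ∈ assOf R N ⊤) p₀) (hne : p ≠ p₀) :
    Maximal (· ∈ assOf R (colonSubmodule N p₀) ⊤) p := by
  obtain ⟨hprime, x, hx⟩ := mem_assOf_top_iff.1 hp.1
  obtain ⟨b, hbp₀, hbp⟩ : ∃ b ∈ p₀, b ∉ p :=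
    SetLike.not_le_iff_exists.1 fun hle => hne (le_antisymm (hp₀.2 hp.1 hle) hle)
  have hcolon : (colonSubmodule N p₀).colon {x} = p := by
    refine le_antisymm (fun a ha => ?_) fun a ha => ?_
    · have hba : (b * a) • x ∈ N := by
        rw [mul_smul]
        exact mem_colon_singleton.1 ha b hbp₀
      exact (hprime.mem_or_mem (hx ▸ mem_colon_singleton.2 hba)).resolve_left hbp
    · exact mem_colon_singleton.2 (le_colonSubmodule N p₀ (mem_colon_singleton.1 (hx ▸ ha)))
  exact ⟨mem_assOf_top_iff.2 ⟨hprime, x, hcolon.symm⟩,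
    fun q hq hle => hp.2 (assOf_top_colonSubmodule_subset N p₀ hq) hle⟩

end RegularPrimeExt

namespace HasGPIF

variable {N K : Submodule R M} {p : Ideal R} {s : Multiset (Ideal R)}

theorem top : HasGPIF (⊤ : Submodule R M) ⊤ 0 :=
  ⟨0, fun _ => ⊤, Fin.elim0, rfl, rfl, fun i => i.elim0, rfl⟩

theorem cons (hstep : IsRegularPrimeExtIn ⊤ p N K) (h : HasGPIF K ⊤ s) :
    HasGPIF N ⊤ (p ::ₘ s) := by
  obtain ⟨n, F, q, h0, hl, hF, rfl⟩ := h
  refine ⟨n + 1, Fin.cons N F, Fin.cons p q, rfl, hl, fun i => ?_, by simp [List.ofFn_succ]⟩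
  induction i using Fin.cases with
  | zero => simpa [h0] using hstep
  | succ j => simpa [← Fin.succ_castSucc] using hF j

theorem eq_top_and_eq_zero_or_cons (h : HasGPIF N ⊤ s) : (N = ⊤ ∧ s = 0) ∨
    ∃ p K t, IsRegularPrimeExtIn ⊤ p N K ∧ HasGPIF K ⊤ t ∧ s = p ::ₘ t := by
  obtain ⟨n, F, q, rfl, hl, hF, rfl⟩ := h
  cases n with
  | zero => exact Or.inl ⟨hl, rfl⟩
  | succ m =>
    refine Or.inr ⟨q 0, F 1, List.ofFn (q ∘ Fin.succ), hF 0, ⟨m, F ∘ Fin.succ, q ∘ Fin.succ, rfl,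
      by simpa using hl, fun i => by simpa [← Fin.succ_castSucc] using hF i.succ, rfl⟩, ?_⟩
    simp [List.ofFn_succ, Function.comp_def]

theorem eq_zero_of_top (h : HasGPIF (⊤ : Submodule R M) ⊤ s) : s = 0 := by
  rcases h.eq_top_and_eq_zero_or_cons with ⟨-, rfl⟩ | ⟨p, K, t, hstep, -, -⟩
  · rfl
  · simpa [assOf_top_top] using hstep.2.1

variable [IsNoetherianRing R]

theorem induction_on {motive : Submodule R M → Multiset (Ideal R) → Prop} (h : HasGPIF N ⊤ s)
    (top : motive ⊤ 0)
    (cons : ∀ N p s, Maximal (· ∈ assOf R N ⊤) p → HasGPIF (colonSubmodule N p) ⊤ s →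
      motive (colonSubmodule N p) s → motive N (p ::ₘ s)) :
    motive N s := by
  induction s using Multiset.strongInductionOn generalizing N with
  | _ s ih =>
    rcases h.eq_top_and_eq_zero_or_cons with ⟨rfl, rfl⟩ | ⟨p, K, t, hstep, hK, rfl⟩
    · exact top
    · rw [hstep.eq_colonSubmodule] at hK
      exact cons N p t hstep.2 hK (ih t (Multiset.lt_cons_self t p) hK)

theorem cons_colonSubmodule (hp : Maximal (· ∈ assOf R N ⊤) p)
    (h : HasGPIF (colonSubmodule N p) ⊤ s) : HasGPIF N ⊤ (p ::ₘ s) :=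
  cons (isRegularPrimeExtIn_colonSubmodule hp) h

theorem subset_assOf (h : HasGPIF N ⊤ s) : ∀ q ∈ s, q ∈ assOf R N ⊤ := by
  refine h.induction_on (motive := fun N s => ∀ q ∈ s, q ∈ assOf R N ⊤) (by simp)
    fun N p t hp _ ih q hq => ?_
  rcases Multiset.mem_cons.1 hq with rfl | hqt
  · exact hp.1
  · exact assOf_top_colonSubmodule_subset N p (ih q hqt)

variable [DecidableEq (Ideal R)]

theorem exchange (h : HasGPIF N ⊤ s) (hp : Maximal (· ∈ assOf R N ⊤) p) :
    p ∈ s ∧ HasGPIF (colonSubmodule N p) ⊤ (s.erase p) := by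
  refine h.induction_on (motive := fun N s => ∀ p, Maximal (· ∈ assOf R N ⊤) p →
      p ∈ s ∧ HasGPIF (colonSubmodule N p) ⊤ (s.erase p)) (by simp [assOf_top_top])
    (fun N p₀ t hp₀ ht ih p hp => ?_) p hp
  by_cases hpp₀ : p = p₀
  · subst hpp₀
    exact ⟨Multiset.mem_cons_self p t, by rwa [Multiset.erase_cons_head]⟩
  obtain ⟨hpt, hrest⟩ := ih p (maximal_assOf_top_colonSubmodule hp hp₀ hpp₀)
  refine ⟨Multiset.mem_cons_of_mem hpt, ?_⟩
  rw [colonSubmodule_comm] at hrest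
  rw [Multiset.erase_cons_tail_of_mem hpt]
  exact cons_colonSubmodule (maximal_assOf_top_colonSubmodule hp₀ hp (Ne.symm hpp₀)) hrest

theorem colonSubmodule_erase (h : HasGPIF N ⊤ s) (hp : ∀ q ∈ assOf R N ⊤, p ≤ q → q ≤ p) :
    HasGPIF (colonSubmodule N p) ⊤ (s.erase p) := by
  by_cases hpN : p ∈ assOf R N ⊤
  · exact (h.exchange ⟨hpN, fun q hq => hp q hq⟩).2
  · rwa [colonSubmodule_eq_self hp hpN,
      Multiset.erase_of_notMem fun hps => hpN (h.subset_assOf p hps)]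

end HasGPIF

theorem HasGPIF.prod [IsNoetherianRing R] [DecidableEq (Ideal R)] {M' : Type*} [AddCommGroup M']
    [Module R M'] {N : Submodule R M} {N' : Submodule R M'} {s s' : Multiset (Ideal R)}
    (h : HasGPIF N ⊤ s) (h' : HasGPIF N' ⊤ s') : HasGPIF (N.prod N') ⊤ (s ∪ s') := by
  by_cases htop : N.prod N' = ⊤
  · obtain ⟨rfl, rfl⟩ := (prod_eq_top_iff R M M').1 htop
    rw [h.eq_zero_of_top, h'.eq_zero_of_top, htop, Multiset.zero_union]
    exact HasGPIF.top
  obtain ⟨p, hp⟩ := exists_maximal_mem_assOf_top htop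
  have hpN : ∀ q ∈ assOf R N ⊤, p ≤ q → q ≤ p := fun q hq =>
    hp.2 (assOf_top_prod N N' ▸ Or.inl hq)
  have hpN' : ∀ q ∈ assOf R N' ⊤, p ≤ q → q ≤ p := fun q hq =>
    hp.2 (assOf_top_prod N N' ▸ Or.inr hq)
  have hps : p ∈ s ∪ s' := by
    rcases assOf_top_prod N N' ▸ hp.1 with hpAss | hpAss
    · exact Multiset.mem_union.2 (Or.inl (h.exchange ⟨hpAss, fun q hq => hpN q hq⟩).1)
    · exact Multiset.mem_union.2 (Or.inr (h'.exchange ⟨hpAss, fun q hq => hpN' q hq⟩).1)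
  have hrest := (h.colonSubmodule_erase hpN).prod (h'.colonSubmodule_erase hpN')
  rw [← colonSubmodule_prod, ← Multiset.erase_union_distrib] at hrest
  exact Multiset.cons_erase hps ▸ hrest.cons_colonSubmodule hp
termination_by Multiset.card (s ∪ s')
decreasing_by
  rw [← Multiset.erase_union_distrib]
  exact Multiset.card_erase_lt_of_mem hps

theorem gpif_prod_max_general {R : Type*} [CommRing R] [IsNoetherianRing R]
    {M : Type*} [AddCommGroup M] [Module R M]
    {M' : Type*} [AddCommGroup M'] [Module R M']
    {k : ℕ} (p : Fin k → Ideal R)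
    (hdist : Function.Injective p) (r s : Fin k → ℕ)
    (N : Submodule R M) (N' : Submodule R M')
    (h : HasGPIF N ⊤ (∑ i, Multiset.replicate (r i) (p i)))
    (h' : HasGPIF N' ⊤ (∑ i, Multiset.replicate (s i) (p i))) :
    HasGPIF (N.prod N') ⊤ (∑ i, Multiset.replicate (max (r i) (s i)) (p i)) := by
  classical
  rw [← Multiset.sum_replicate_union_sum_replicate hdist]
  exact h.prod h'

/-- If `P_M(N) = p₁^{r₁}⋯p_k^{s_k}` and `P_{M'}(N') = p₁^{s₁}⋯p_k^{s_k}` with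
`rᵢ + sᵢ > 0`, then `P_{M ⊕ M'}(N ⊕ N') = p₁^{t₁}⋯p_k^{t_k}` with `tᵢ = max rᵢ sᵢ`. -/
theorem gpif_prod_max {R : Type*} [CommRing R] [IsNoetherianRing R]
    {M : Type*} [AddCommGroup M] [Module R M] [Module.Finite R M]
    {M' : Type*} [AddCommGroup M'] [Module R M'] [Module.Finite R M']
    {k : ℕ} (p : Fin k → Ideal R) (hprime : ∀ i, (p i).IsPrime)
    (hdist : Function.Injective p) (r s : Fin k → ℕ) (hrs : ∀ i, 0 < r i + s i)
    (N : Submodule R M) (hN : N ≠ ⊤) (N' : Submodule R M') (hN' : N' ≠ ⊤)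
    (h : HasGPIF N ⊤ (∑ i, Multiset.replicate (r i) (p i)))
    (h' : HasGPIF N' ⊤ (∑ i, Multiset.replicate (s i) (p i))) :
    HasGPIF (N.prod N') ⊤ (∑ i, Multiset.replicate (max (r i) (s i)) (p i)) :=
  gpif_prod_max_general p hdist r s N N' h h'
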